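/- arXiv:2106.13384 — 5 statements merged into one kernel-verified Lean document; each statement's English description precedes it below -/
import Mathlib

section
/- Every polynomial vector field of degree at most k−1 on ℝ^d decomposes uniquely as the sum of a gradient of a polynomial of degree at most k and a vector field v of degree at most k−1 satisfying v(x)·x = 0 for all x; that is, ℙ_{k−1}(ℝ^d; ℝ^d) = grad ℙ_k(ℝ^d) ⊕ (ker(·x) ∩ ℙ_{k−1}(ℝ^d; ℝ^d)). -/
/-!
Pairing a vector field with the position vector turns a gradient `∇p` into the Euler
operator `E p = ∑ xᵢ ∂ᵢp`, which multiplies the monomial `x^s` by its degree `|s|`. So `x·v`,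
a polynomial of degree `≤ k` without constant term, equals `E p` for the polynomial `p`
obtained by dividing each coefficient of `x·v` by its degree, and `w = v - ∇p` satisfies
`x·w = 0`. Conversely, any decomposition has `E p = x·v`, which determines `p` up to a
constant, hence determines `∇p`.
-/

open MvPolynomial Finset

namespace MvPolynomial

variable {σ R K : Type*}

theorem totalDegree_pderiv_le [CommSemiring R] (f : MvPolynomial σ R) (i : σ) :
    (pderiv i f).totalDegree ≤ f.totalDegree - 1 := by
  refine Finset.sup_le fun m hm => ?_
  rw [mem_support_iff, coeff_pderiv] at hm
  have := le_totalDegree (mem_support_iff.mpr (left_ne_zero_of_mul hm))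
  rw [Finsupp.sum, ← Finsupp.degree_apply, map_add, Finsupp.degree_single] at this
  change m.degree ≤ _
  omega

/-- The inverse of the Euler operator `∑ i, X i * pderiv i` on polynomials without constant term,
`q ↦ ∫₀¹ q(t x) dt / t`; the constant term of `q` is dropped since `coeff 0 q / 0 = 0`. -/
noncomputable def radialPrimitive [Field K] (q : MvPolynomial σ K) : MvPolynomial σ K :=
  ∑ s ∈ q.support, monomial s (coeff s q / s.degree)

theorem coeff_radialPrimitive [Field K] (q : MvPolynomial σ K) (s : σ →₀ ℕ) :
    coeff s (radialPrimitive q) = coeff s q / s.degree := by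
  classical
  rw [radialPrimitive, coeff_sum]
  simp only [coeff_monomial, sum_ite_eq', mem_support_iff]
  split_ifs with h <;> simp_all

theorem totalDegree_radialPrimitive_le [Field K] (q : MvPolynomial σ K) :
    (radialPrimitive q).totalDegree ≤ q.totalDegree := by
  refine totalDegree_le_of_support_subset fun s hs => ?_
  rw [mem_support_iff, coeff_radialPrimitive] at hs
  exact mem_support_iff.mpr (div_ne_zero_iff.mp hs).1

section Radial

variable [Fintype σ]

theorem coeff_sum_X_mul_pderiv [CommSemiring R] (f : MvPolynomial σ R) (s : σ →₀ ℕ) :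
    coeff s (∑ i, X i * pderiv i f) = s.degree • coeff s f := by
  induction f using MvPolynomial.induction_on' with
  | monomial t a =>
    classical
    simp only [X_mul_pderiv_monomial, ← sum_smul, ← Finsupp.degree_eq_sum, coeff_smul,
      coeff_monomial]
    split_ifs with h <;> simp [h]
  | add f g hf hg =>
    simp only [map_add, mul_add, sum_add_distrib, coeff_add, hf, hg, smul_add]

theorem eq_C_of_sum_X_mul_pderiv_eq_zero [CommSemiring R] [IsAddTorsionFree R]
    {f : MvPolynomial σ R} (h : ∑ i, X i * pderiv i f = 0) : f = C (coeff 0 f) := by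
  ext s
  rcases eq_or_ne s 0 with rfl | hs
  · simp
  · have hdeg : s.degree ≠ 0 := (Finsupp.degree_eq_zero_iff s).not.mpr hs
    have := coeff_sum_X_mul_pderiv f s
    rw [h, coeff_zero, eq_comm, nsmul_eq_zero_iff_right hdeg] at this
    classical
    rw [this, coeff_C, if_neg (Ne.symm hs)]

theorem pderiv_eq_of_sum_X_mul_pderiv_eq [CommRing R] [IsAddTorsionFree R]
    {f g : MvPolynomial σ R} (h : ∑ i, X i * pderiv i f = ∑ i, X i * pderiv i g) (i : σ) :
    pderiv i f = pderiv i g := by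
  have hfg : ∑ i, X i * pderiv i (f - g) = 0 := by
    simp only [map_sub, mul_sub, sum_sub_distrib, h, sub_self]
  rw [← sub_eq_zero, ← map_sub, eq_C_of_sum_X_mul_pderiv_eq_zero hfg, pderiv_C]

theorem coeff_zero_sum_X_mul [CommSemiring R] (w : σ → MvPolynomial σ R) :
    coeff 0 (∑ i, X i * w i) = 0 := by
  simp [← constantCoeff_eq]

theorem totalDegree_sum_X_mul_le [CommSemiring R] {w : σ → MvPolynomial σ R} {n : ℕ}
    (hw : ∀ i, (w i).totalDegree ≤ n) : (∑ i, X i * w i).totalDegree ≤ n + 1 := by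
  refine totalDegree_finsetSum_le fun i _ => (totalDegree_mul _ _).trans ?_
  have hX : (X i : MvPolynomial σ R).totalDegree ≤ 1 :=
    (totalDegree_monomial_le _ _).trans (by simp)
  have := hw i
  omega

theorem sum_X_mul_pderiv_radialPrimitive [Field K] [CharZero K] (q : MvPolynomial σ K) :
    ∑ i, X i * pderiv i (radialPrimitive q) = q - C (coeff 0 q) := by
  classical
  ext s
  rw [coeff_sum_X_mul_pderiv, coeff_radialPrimitive, coeff_sub, coeff_C]
  rcases eq_or_ne s 0 with rfl | hs
  · simp
  · have hdeg : (s.degree : K) ≠ 0 :=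
      Nat.cast_ne_zero.mpr ((Finsupp.degree_eq_zero_iff s).not.mpr hs)
    rw [if_neg (Ne.symm hs), nsmul_eq_mul, mul_div_cancel₀ _ hdeg, sub_zero]

end Radial

end MvPolynomial

theorem stmt_4_general (d k : ℕ) (hk : 1 ≤ k)
    (v : Fin d → MvPolynomial (Fin d) ℝ) (hv : ∀ i, (v i).totalDegree ≤ k - 1) :
    ∃! gw : (Fin d → MvPolynomial (Fin d) ℝ) × (Fin d → MvPolynomial (Fin d) ℝ),
      (∃ p : MvPolynomial (Fin d) ℝ, p.totalDegree ≤ k ∧ gw.1 = fun i => pderiv i p) ∧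
      (∀ i, (gw.2 i).totalDegree ≤ k - 1) ∧
      (∑ i : Fin d, X i * gw.2 i = 0) ∧
      v = gw.1 + gw.2 := by
  set q := ∑ i, X i * v i
  set p := radialPrimitive q
  have hp : ∑ i, X i * pderiv i p = q := by
    rw [sum_X_mul_pderiv_radialPrimitive, coeff_zero_sum_X_mul, C_0, sub_zero]
  have hpdeg : p.totalDegree ≤ k :=
    (totalDegree_radialPrimitive_le q).trans ((totalDegree_sum_X_mul_le hv).trans (by omega))
  refine ⟨(fun i => pderiv i p, v - fun i => pderiv i p),
    ⟨⟨p, hpdeg, rfl⟩, fun i => ?_, ?_, by simp⟩, ?_⟩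
  · exact (totalDegree_sub _ _).trans
      (max_le (hv i) ((totalDegree_pderiv_le p i).trans (by omega)))
  · simp only [Pi.sub_apply, mul_sub, sum_sub_distrib, hp, q, sub_self]
  · rintro ⟨g, w⟩ ⟨⟨p', -, rfl⟩, -, hw, rfl⟩
    have hp' : ∑ i, X i * pderiv i p' = ∑ i, X i * pderiv i p := by
      rw [hp]
      simpa [q, mul_add, sum_add_distrib] using hw
    have hg : (fun i => pderiv i p') = fun i => pderiv i p :=
      funext (pderiv_eq_of_sum_X_mul_pderiv_eq hp')
    rw [hg, add_sub_cancel_left]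

/-- Every polynomial vector field of degree at most `k-1` on `ℝ^d` decomposes uniquely as
the sum of the gradient of a polynomial of degree at most `k` and a vector field `w` of
degree at most `k-1` with `w(x)·x ≡ 0`:
`ℙ_{k−1}(ℝ^d; ℝ^d) = grad ℙ_k(ℝ^d) ⊕ (ker(·x) ∩ ℙ_{k−1}(ℝ^d; ℝ^d))`. -/
theorem stmt_4 (d k : ℕ) (hd : 1 ≤ d) (hk : 1 ≤ k)
    (v : Fin d → MvPolynomial (Fin d) ℝ) (hv : ∀ i, (v i).totalDegree ≤ k - 1) :
    ∃! gw : (Fin d → MvPolynomial (Fin d) ℝ) × (Fin d → MvPolynomial (Fin d) ℝ),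
      (∃ p : MvPolynomial (Fin d) ℝ, p.totalDegree ≤ k ∧ gw.1 = fun i => pderiv i p) ∧
      (∀ i, (gw.2 i).totalDegree ≤ k - 1) ∧
      (∑ i : Fin d, X i * gw.2 i = 0) ∧
      v = gw.1 + gw.2 :=
  stmt_4_general d k hk v hv
end

section
/- The map τ ↦ div τ is a bijection from the space sym(ℍ_k(ℝ^d; ℝ^d)·x^T) of symmetric parts of tensor products q(x)x^T with q homogeneous of degree k, onto ℍ_k(ℝ^d; ℝ^d). Consequently div : ℙ_{k+1}(ℝ^d; 𝕊) → ℙ_k(ℝ^d; ℝ^d) is surjective. -/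
open MvPolynomial Finset

/-- The symmetric part of the tensor product `q(x) xᵀ`, as a matrix-valued polynomial field. -/
noncomputable def symQX (d : ℕ) (q : Fin d → MvPolynomial (Fin d) ℝ) :
    Fin d → Fin d → MvPolynomial (Fin d) ℝ :=
  fun i j => C (2⁻¹ : ℝ) * (q i * X j + X i * q j)

/-- The row-wise divergence of a matrix-valued polynomial field. -/
noncomputable def matDiv (d : ℕ) (τ : Fin d → Fin d → MvPolynomial (Fin d) ℝ) :
    Fin d → MvPolynomial (Fin d) ℝ :=
  fun i => ∑ j : Fin d, pderiv j (τ i j)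

/-!
For `q` homogeneous of degree `k`, Euler's identity gives `div sym(q xᵀ) = ½ ((k + d + 1) q + x div q)`,
and for `s` homogeneous of degree `k - 1` it gives `div (x s) = (d + k - 1) s`. Taking the divergence of
`v = div sym(q xᵀ)` therefore recovers `div q`, and then `q`, as an explicit linear expression in `v`;
this expression is a two-sided inverse on homogeneous fields. For a polynomial field of degree `≤ k`
one inverts each homogeneous component separately and sums.
-/

namespace MvPolynomial

variable {R σ : Type*} [CommSemiring R]

lemma sum_homogeneousComponent_of_totalDegree_le {p : MvPolynomial σ R} {n : ℕ}
    (h : p.totalDegree ≤ n) : ∑ m ∈ range (n + 1), homogeneousComponent m p = p := by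
  conv_rhs => rw [← sum_homogeneousComponent p]
  refine (sum_subset (range_subset_range.mpr (by omega)) fun m _ hm => ?_).symm
  exact homogeneousComponent_eq_zero _ _ (by simp only [mem_range] at hm; omega)

noncomputable def radial : MvPolynomial σ R →ₗ[R] σ → MvPolynomial σ R :=
  LinearMap.pi fun i => LinearMap.mulLeft R (X i)

@[simp]
lemma radial_apply (s : MvPolynomial σ R) (i : σ) : radial s i = X i * s := rfl

variable [Fintype σ]

noncomputable def divergence : (σ → MvPolynomial σ R) →ₗ[R] MvPolynomial σ R :=
  ∑ j, (pderiv j).comp (LinearMap.proj j)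

@[simp]
lemma divergence_apply (q : σ → MvPolynomial σ R) : divergence q = ∑ j, pderiv j (q j) := by
  simp [divergence]

lemma isHomogeneous_divergence {n : ℕ} {q : σ → MvPolynomial σ R}
    (hq : ∀ i, (q i).IsHomogeneous n) : (divergence q).IsHomogeneous (n - 1) := by
  rw [divergence_apply]
  exact IsHomogeneous.sum _ _ _ fun j _ => (hq j).pderiv

lemma divergence_radial {n : ℕ} {s : MvPolynomial σ R} (hs : s.IsHomogeneous n) :
    divergence (radial s) = (Fintype.card σ + n) • s := by
  simp only [divergence_apply, radial_apply, Derivation.leibniz, smul_eq_mul, pderiv_X_self,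
    mul_one, sum_add_distrib, hs.sum_X_mul_pderiv, sum_const, card_univ, add_smul]
  exact add_comm _ _

lemma isHomogeneous_radial_divergence {n : ℕ} {q : σ → MvPolynomial σ R}
    (hq : ∀ i, (q i).IsHomogeneous n) (i : σ) : (radial (divergence q) i).IsHomogeneous n := by
  cases n with
  | zero =>
    have hconst : ∀ j, pderiv j (q j) = 0 := fun j => by
      rw [totalDegree_eq_zero_iff_eq_C.mp ((totalDegree_zero_iff_isHomogeneous _).mpr (hq j)),
        pderiv_C]
    simp [hconst, isHomogeneous_zero]
  | succ n =>
    rw [radial_apply, add_comm]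
    exact (isHomogeneous_X R i).mul (isHomogeneous_divergence hq)

end MvPolynomial

section SymmetricTensor

variable {d k : ℕ}

lemma matDiv_symQX {q : Fin d → MvPolynomial (Fin d) ℝ} (hq : ∀ i, (q i).IsHomogeneous k) :
    matDiv d (symQX d q) = (2⁻¹ : ℝ) • ((k + d + 1 : ℝ) • q + radial (divergence q)) := by
  funext i
  have hEuler : ∑ j, X j * pderiv j (q i) = k • q i := (hq i).sum_X_mul_pderiv
  have hdiag : ∑ j, q j * pderiv j (X i) = q i := by simp [pderiv_X, Pi.single_apply]
  simp only [matDiv, symQX, pderiv_C_mul, ← mul_sum]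
  simp only [map_add, Derivation.leibniz, smul_eq_mul, pderiv_X_self, sum_add_distrib, hEuler, hdiag]
  rw [← mul_sum, C_mul']
  simp only [Pi.smul_apply, Pi.add_apply, radial_apply, divergence_apply, mul_one, sum_const,
    mul_smul_comm, mul_sum, card_univ, Fintype.card_fin]
  module

/-- With `N = k + d + 1` and `M = d + (k - 1)`, taking the divergence of
`v = ½ (N q + x div q)` gives `div v = ½ (N + M) div q`; solving back for `q` gives this formula.
The truncated `k - 1` is harmless: for `k = 0` the divergence of `v` vanishes. -/
noncomputable def divSymInv (d k : ℕ) (v : Fin d → MvPolynomial (Fin d) ℝ) :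
    Fin d → MvPolynomial (Fin d) ℝ :=
  (2 / (k + d + 1 : ℝ)) •
    (v - ((k + d + 1 : ℝ) + ((d + (k - 1) : ℕ) : ℝ))⁻¹ • radial (divergence v))

lemma divSymInv_matDiv_symQX {q : Fin d → MvPolynomial (Fin d) ℝ}
    (hq : ∀ i, (q i).IsHomogeneous k) : divSymInv d k (matDiv d (symQX d q)) = q := by
  have hdiv := divergence_radial (isHomogeneous_divergence hq)
  rw [Fintype.card_fin, ← Nat.cast_smul_eq_nsmul ℝ] at hdiv
  have hN : (k + d + 1 : ℝ) ≠ 0 := by positivity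
  have hNM : (k + d + 1 : ℝ) + ((d + (k - 1) : ℕ) : ℝ) ≠ 0 := by positivity
  rw [matDiv_symQX hq, divSymInv]
  simp only [map_smul, map_add, hdiv]
  match_scalars
  · field_simp
  · field_simp
    ring

lemma isHomogeneous_divSymInv {v : Fin d → MvPolynomial (Fin d) ℝ}
    (hv : ∀ i, (v i).IsHomogeneous k) (i : Fin d) : (divSymInv d k v i).IsHomogeneous k := by
  simp only [divSymInv, Pi.smul_apply, Pi.sub_apply, ← C_mul']
  exact ((hv i).sub ((isHomogeneous_radial_divergence hv i).C_mul _)).C_mul _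

lemma matDiv_symQX_divSymInv {v : Fin d → MvPolynomial (Fin d) ℝ}
    (hv : ∀ i, (v i).IsHomogeneous k) : matDiv d (symQX d (divSymInv d k v)) = v := by
  have hdiv := divergence_radial (isHomogeneous_divergence hv)
  rw [Fintype.card_fin, ← Nat.cast_smul_eq_nsmul ℝ] at hdiv
  have hN : (k + d + 1 : ℝ) ≠ 0 := by positivity
  have hNM : (k + d + 1 : ℝ) + ((d + (k - 1) : ℕ) : ℝ) ≠ 0 := by positivity
  rw [matDiv_symQX (isHomogeneous_divSymInv hv), divSymInv]
  simp only [map_smul, map_sub, hdiv]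
  match_scalars
  · field_simp
  · field_simp
    ring

lemma isHomogeneous_matDiv_symQX {q : Fin d → MvPolynomial (Fin d) ℝ}
    (hq : ∀ i, (q i).IsHomogeneous k) (i : Fin d) : (matDiv d (symQX d q) i).IsHomogeneous k := by
  rw [matDiv_symQX hq]
  exact Submodule.smul_mem (homogeneousSubmodule (Fin d) ℝ k) _
    (add_mem (Submodule.smul_mem _ _ (hq i)) (isHomogeneous_radial_divergence hq i))

lemma isHomogeneous_symQX {q : Fin d → MvPolynomial (Fin d) ℝ}
    (hq : ∀ i, (q i).IsHomogeneous k) (i j : Fin d) : (symQX d q i j).IsHomogeneous (k + 1) := by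
  have hXq := (isHomogeneous_X ℝ i).mul (hq j)
  rw [add_comm] at hXq
  exact (((hq i).mul (isHomogeneous_X ℝ j)).add hXq).C_mul _

lemma symQX_comm (q : Fin d → MvPolynomial (Fin d) ℝ) (i j : Fin d) :
    symQX d q i j = symQX d q j i := by
  unfold symQX
  ring

lemma matDiv_sum {ι : Type*} (s : Finset ι) (τ : ι → Fin d → Fin d → MvPolynomial (Fin d) ℝ) :
    matDiv d (∑ m ∈ s, τ m) = ∑ m ∈ s, matDiv d (τ m) := by
  funext i
  simp only [matDiv, Finset.sum_apply, map_sum]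
  exact Finset.sum_comm

lemma bijOn_matDiv_symQX :
    Set.BijOn (matDiv d)
      {τ | ∃ q : Fin d → MvPolynomial (Fin d) ℝ, (∀ i, (q i).IsHomogeneous k) ∧ τ = symQX d q}
      {v | ∀ i, (v i).IsHomogeneous k} := by
  refine Set.InvOn.bijOn (f' := fun v => symQX d (divSymInv d k v)) ⟨?_, ?_⟩ ?_ ?_
  · rintro _ ⟨q, hq, rfl⟩
    exact congrArg (symQX d) (divSymInv_matDiv_symQX hq)
  · exact fun _ hv => matDiv_symQX_divSymInv hv
  · rintro _ ⟨q, hq, rfl⟩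
    exact isHomogeneous_matDiv_symQX hq
  · exact fun _ hv => ⟨_, isHomogeneous_divSymInv hv, rfl⟩

lemma exists_symm_totalDegree_le_matDiv_eq {v : Fin d → MvPolynomial (Fin d) ℝ}
    (hv : ∀ i, (v i).totalDegree ≤ k) :
    ∃ τ : Fin d → Fin d → MvPolynomial (Fin d) ℝ,
      (∀ i j, (τ i j).totalDegree ≤ k + 1) ∧ (∀ i j, τ i j = τ j i) ∧ matDiv d τ = v := by
  set w : ℕ → Fin d → MvPolynomial (Fin d) ℝ := fun m i => homogeneousComponent m (v i)
  have hw : ∀ m i, (w m i).IsHomogeneous m := fun m i => homogeneousComponent_isHomogeneous m _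
  refine ⟨∑ m ∈ range (k + 1), symQX d (divSymInv d m (w m)), fun i j => ?_, fun i j => ?_, ?_⟩
  · simp only [Finset.sum_apply]
    refine (totalDegree_finsetSum _ _).trans (Finset.sup_le fun m hm => ?_)
    refine (isHomogeneous_symQX (isHomogeneous_divSymInv (hw m)) i j).totalDegree_le.trans ?_
    simp only [mem_range] at hm
    omega
  · simp only [Finset.sum_apply]
    exact Finset.sum_congr rfl fun m _ => symQX_comm _ i j
  · funext i
    simp only [matDiv_sum, matDiv_symQX_divSymInv (hw _), Finset.sum_apply, w]
    exact sum_homogeneousComponent_of_totalDegree_le (hv i)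

end SymmetricTensor

theorem stmt_8_general (d k : ℕ) :
    Set.BijOn (matDiv d)
      {τ : Fin d → Fin d → MvPolynomial (Fin d) ℝ |
        ∃ q : Fin d → MvPolynomial (Fin d) ℝ, (∀ i, (q i).IsHomogeneous k) ∧ τ = symQX d q}
      {v : Fin d → MvPolynomial (Fin d) ℝ | ∀ i, (v i).IsHomogeneous k} ∧
    (∀ v : Fin d → MvPolynomial (Fin d) ℝ, (∀ i, (v i).totalDegree ≤ k) →
      ∃ τ : Fin d → Fin d → MvPolynomial (Fin d) ℝ,
        (∀ i j, (τ i j).totalDegree ≤ k + 1) ∧ (∀ i j, τ i j = τ j i) ∧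
        matDiv d τ = v) :=
  ⟨bijOn_matDiv_symQX, fun _ hv => exists_symm_totalDegree_le_matDiv_eq hv⟩

/-- `div` is a bijection from `sym(ℍ_k(ℝ^d;ℝ^d)·xᵀ)` onto `ℍ_k(ℝ^d;ℝ^d)`; consequently
`div : ℙ_{k+1}(ℝ^d;𝕊) → ℙ_k(ℝ^d;ℝ^d)` is surjective. -/
theorem stmt_8 (d k : ℕ) (hd : 1 ≤ d) :
    Set.BijOn (matDiv d)
      {τ : Fin d → Fin d → MvPolynomial (Fin d) ℝ |
        ∃ q : Fin d → MvPolynomial (Fin d) ℝ, (∀ i, (q i).IsHomogeneous k) ∧ τ = symQX d q}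
      {v : Fin d → MvPolynomial (Fin d) ℝ | ∀ i, (v i).IsHomogeneous k} ∧
    (∀ v : Fin d → MvPolynomial (Fin d) ℝ, (∀ i, (v i).totalDegree ≤ k) →
      ∃ τ : Fin d → Fin d → MvPolynomial (Fin d) ℝ,
        (∀ i j, (τ i j).totalDegree ≤ k + 1) ∧ (∀ i j, τ i j = τ j i) ∧
        matDiv d τ = v) :=
  stmt_8_general d k
end

section
/- The map q ↦ div div(x x^T q) is a bijection from homogeneous polynomials of degree k−1 to homogeneous polynomials of degree k−1; in fact div div(x x^T q) = (k+d)(k+d−1)q for q ∈ ℍ_{k−1}. Consequently div div : ℙ_{k+1}(ℝ^d; 𝕊) → ℙ_{k−1}(ℝ^d) is surjective. -/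
/-!
Leibniz's rule and Euler's identity `∑ i, xᵢ ∂ᵢ φ = n φ` for `φ ∈ ℍₙ` give
`div (x φ) = (n + d) φ`. Since `xᵢ xⱼ q = xⱼ (xᵢ q)` with `xᵢ q ∈ ℍₙ₊₁`, the inner divergence
of `x xᵀ q` is `(n + d + 1) xᵢ q`, and the outer one then `(n + d) (n + d + 1) q`. So
`div div (x xᵀ ·)` acts on each `ℍₘ` as the positive scalar `(m + d) (m + d + 1)`, hence
bijectively, and a polynomial `p` of degree `≤ k - 1` is `div div (x xᵀ P)` for
`P = ∑ₘ ((m + d) (m + d + 1))⁻¹ pₘ`, the sum running over the homogeneous components `pₘ` of `p`.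
-/

open MvPolynomial Finset

namespace MvPolynomial

variable {σ R K : Type*} [CommSemiring R] [Field K]

section Fintype

variable [Fintype σ]

theorem IsHomogeneous.sum_pderiv_X_mul {φ : MvPolynomial σ R} {n : ℕ} (h : φ.IsHomogeneous n) :
    ∑ i, pderiv i (X i * φ) = (n + Fintype.card σ) • φ := by
  simp only [pderiv_mul, pderiv_X_self, one_mul]
  rw [sum_add_distrib, h.sum_X_mul_pderiv, sum_const, card_univ, add_smul, add_comm]

theorem IsHomogeneous.sum_sum_pderiv_pderiv_X_mul_X_mul {φ : MvPolynomial σ R} {n : ℕ}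
    (h : φ.IsHomogeneous n) :
    ∑ i, ∑ j, pderiv i (pderiv j (X i * X j * φ)) =
      ((n + Fintype.card σ) * (n + Fintype.card σ + 1)) • φ := by
  have inner (i : σ) : ∑ j, pderiv j (X i * X j * φ) = (n + 1 + Fintype.card σ) • (X i * φ) := by
    simp only [fun j ↦ show X i * X j * φ = X j * (X i * φ) by ring]
    rw [add_comm n 1]
    exact ((isHomogeneous_X R i).mul h).sum_pderiv_X_mul
  simp only [← map_sum, inner, map_nsmul, ← smul_sum, h.sum_pderiv_X_mul, smul_smul]
  congr 1
  ring

variable (σ R) in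
/-- `q ↦ div div (x xᵀ q)`. -/
noncomputable def divDivXX : MvPolynomial σ R →ₗ[R] MvPolynomial σ R :=
  ∑ i, ∑ j, (pderiv i).toLinearMap ∘ₗ (pderiv j).toLinearMap ∘ₗ LinearMap.mulLeft R (X i * X j)

theorem divDivXX_apply (φ : MvPolynomial σ R) :
    divDivXX σ R φ = ∑ i, ∑ j, pderiv i (pderiv j (X i * X j * φ)) := by
  simp only [divDivXX, LinearMap.coe_sum, LinearMap.coe_comp, Derivation.coeFn_coe,
    Finset.sum_apply, Function.comp_apply, LinearMap.mulLeft_apply]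

end Fintype

theorem bijOn_isHomogeneous_of_eq_smul {f : MvPolynomial σ K → MvPolynomial σ K} {n : ℕ} {c : K}
    (hc : c ≠ 0) (hf : ∀ φ : MvPolynomial σ K, φ.IsHomogeneous n → f φ = c • φ) :
    Set.BijOn f {φ | φ.IsHomogeneous n} {φ | φ.IsHomogeneous n} := by
  have smul_mem (a : K) {φ : MvPolynomial σ K} (h : φ.IsHomogeneous n) : (a • φ).IsHomogeneous n :=
    (homogeneousSubmodule σ K n).smul_mem a h
  refine ⟨fun φ h ↦ hf φ h ▸ smul_mem c h, fun φ hφ ψ hψ e ↦ ?_, fun ψ hψ ↦ ?_⟩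
  · rw [hf φ hφ, hf ψ hψ] at e
    exact smul_right_injective _ hc e
  · refine ⟨c⁻¹ • ψ, smul_mem _ hψ, ?_⟩
    rw [hf _ (smul_mem _ hψ), smul_smul, mul_inv_cancel₀ hc, one_smul]

theorem totalDegree_sum_smul_homogeneousComponent_le (a : ℕ → K) (p : MvPolynomial σ K) :
    (∑ m ∈ range (p.totalDegree + 1), a m • homogeneousComponent m p).totalDegree ≤
      p.totalDegree := by
  refine (totalDegree_finsetSum _ _).trans (Finset.sup_le fun m hm ↦ ?_)
  calc (a m • homogeneousComponent m p).totalDegree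
      ≤ (homogeneousComponent m p).totalDegree := totalDegree_smul_le _ _
    _ ≤ m := (homogeneousComponent_isHomogeneous m p).totalDegree_le
    _ ≤ p.totalDegree := Nat.lt_succ_iff.mp (mem_range.mp hm)

theorem apply_sum_inv_smul_homogeneousComponent
    (f : MvPolynomial σ K →ₗ[K] MvPolynomial σ K) (c : ℕ → K)
    (hf : ∀ m (φ : MvPolynomial σ K), φ.IsHomogeneous m → f φ = c m • φ)
    (p : MvPolynomial σ K) (hc : ∀ m ≤ p.totalDegree, c m ≠ 0) :
    f (∑ m ∈ range (p.totalDegree + 1), (c m)⁻¹ • homogeneousComponent m p) = p := by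
  conv_rhs => rw [← sum_homogeneousComponent p]
  refine (map_sum _ _ _).trans (sum_congr rfl fun m hm ↦ ?_)
  rw [map_smul, hf m _ (homogeneousComponent_isHomogeneous m p), smul_smul,
    inv_mul_cancel₀ (hc m (Nat.lt_succ_iff.mp (mem_range.mp hm))), one_smul]

end MvPolynomial

/-- `div div (x xᵀ q) = (k+d)(k+d−1) q` for `q ∈ ℍ_{k−1}`; the map
`q ↦ div div (x xᵀ q)` is a bijection of `ℍ_{k−1}` onto itself; consequently
`div div : ℙ_{k+1}(ℝ^d; 𝕊) → ℙ_{k−1}(ℝ^d)` is surjective. -/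
theorem stmt_13 (d k : ℕ) (hd : 1 ≤ d) (hk : 1 ≤ k) :
    (∀ q : MvPolynomial (Fin d) ℝ, q.IsHomogeneous (k - 1) →
      ∑ i : Fin d, ∑ j : Fin d, pderiv i (pderiv j (X i * X j * q)) =
        (((k + d) * (k + d - 1) : ℕ) : MvPolynomial (Fin d) ℝ) * q) ∧
    Set.BijOn
      (fun q : MvPolynomial (Fin d) ℝ =>
        ∑ i : Fin d, ∑ j : Fin d, pderiv i (pderiv j (X i * X j * q)))
      {q : MvPolynomial (Fin d) ℝ | q.IsHomogeneous (k - 1)}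
      {q : MvPolynomial (Fin d) ℝ | q.IsHomogeneous (k - 1)} ∧
    (∀ p : MvPolynomial (Fin d) ℝ, p.totalDegree ≤ k - 1 →
      ∃ τ : Fin d → Fin d → MvPolynomial (Fin d) ℝ,
        (∀ i j, (τ i j).totalDegree ≤ k + 1) ∧ (∀ i j, τ i j = τ j i) ∧
        ∑ i : Fin d, ∑ j : Fin d, pderiv i (pderiv j (τ i j)) = p) := by
  obtain ⟨n, rfl⟩ : ∃ n, k = n + 1 := ⟨k - 1, by omega⟩
  set c : ℕ → ℝ := fun m ↦ ((m + d) * (m + d + 1) : ℕ)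
  have hc (m : ℕ) : c m ≠ 0 := by simp only [c]; positivity
  have divDiv_eq (m : ℕ) (q : MvPolynomial (Fin d) ℝ) (hq : q.IsHomogeneous m) :
      divDivXX (Fin d) ℝ q = c m • q := by
    rw [divDivXX_apply, hq.sum_sum_pderiv_pderiv_X_mul_X_mul, Fintype.card_fin,
      Nat.cast_smul_eq_nsmul]
  simp only [Nat.add_sub_cancel, ← divDivXX_apply]
  refine ⟨fun q hq ↦ ?_, bijOn_isHomogeneous_of_eq_smul (hc n) (divDiv_eq n), fun p hp ↦ ?_⟩
  · rw [divDiv_eq n q hq, Nat.cast_smul_eq_nsmul, nsmul_eq_mul,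
      show (n + 1 + d) * (n + 1 + d - 1) = (n + d) * (n + d + 1) by
        rw [show n + 1 + d - 1 = n + d by omega]; ring]
  set P := ∑ m ∈ range (p.totalDegree + 1), (c m)⁻¹ • homogeneousComponent m p
  refine ⟨fun i j ↦ X i * X j * P, fun i j ↦ ?_, fun i j ↦ by ring, ?_⟩
  · calc (X i * X j * P).totalDegree
        ≤ (X i * X j : MvPolynomial (Fin d) ℝ).totalDegree + P.totalDegree := totalDegree_mul _ _
      _ ≤ 2 + n := add_le_add ((isHomogeneous_X ℝ i).mul (isHomogeneous_X ℝ j)).totalDegree_le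
          ((totalDegree_sum_smul_homogeneousComponent_le _ p).trans hp)
      _ = n + 1 + 1 := by ring
  · rw [← divDivXX_apply]
    exact apply_sum_inv_smul_homogeneousComponent _ c divDiv_eq p fun m _ ↦ hc m
end

section
/- Let K ⊂ ℝ^d be a nondegenerate simplex with edge vectors t_{i,j} = x_j − x_i and normals n_i as above. Define T_{i,j} := t_{i,j} t_{i,j}^T and N_{i,j} := (1/(2(n_i·t_{i,j})(n_j·t_{i,j})))·(n_i n_j^T + n_j n_i^T) for 0 ≤ i < j ≤ d. Then T_{i,j} : N_{k,ℓ} = δ_{ik}δ_{jℓ} under the Frobenius inner product, and each of {T_{i,j}} and {N_{i,j}} is a basis of the space 𝕊 of symmetric d×d matrices. -/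
/-!
If `k ∉ {i, j}`, the edge `t_{ij}` lies in the face opposite `x_k`, so `n_k · t_{ij} = 0`.
Since `T_{ij} : N_{kl}` is a multiple of `(n_k · t_{ij}) (n_l · t_{ij})`, it vanishes unless
`{k, l} = {i, j}`, where the normalisation of `N_{ij}` makes it `1`. A biorthogonal pair of
families is linearly independent on both sides. Both families consist of symmetric matrices
and have `d (d + 1) / 2` members, while a symmetric matrix is determined by its entries on and
above the diagonal, so `dim 𝕊 ≤ d (d + 1) / 2` and each family spans `𝕊`.
-/

open Matrix Finset

section Biorthogonal

variable {ι R M : Type*} [Fintype ι] [DecidableEq ι] [CommSemiring R]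
  [AddCommMonoid M] [Module R M]

theorem linearIndependent_of_biorthogonal {u : ι → M} (f : ι → M →ₗ[R] R)
    (h : ∀ i j, f i (u j) = if i = j then 1 else 0) : LinearIndependent R u := by
  have hpi : LinearMap.pi f ∘ u = Pi.basisFun R ι := by
    ext j i
    simp [h, Pi.single_apply]
  exact LinearIndependent.of_comp (LinearMap.pi f) (hpi ▸ (Pi.basisFun R ι).linearIndependent)

theorem LinearMap.linearIndependent_of_biorthogonal {N : Type*} [AddCommMonoid N] [Module R N]
    (B : M →ₗ[R] N →ₗ[R] R) {u : ι → M} {v : ι → N}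
    (h : ∀ i j, B (u i) (v j) = if i = j then 1 else 0) :
    LinearIndependent R u ∧ LinearIndependent R v :=
  ⟨_root_.linearIndependent_of_biorthogonal (fun i => B.flip (v i))
      fun i j => by simp [h, eq_comm],
    _root_.linearIndependent_of_biorthogonal (fun i => B (u i)) fun i j => h i j⟩

end Biorthogonal

namespace Matrix

section Frobenius

variable {m n R : Type*} [Fintype m] [Fintype n] [CommSemiring R]

def frobeniusForm : Matrix m n R →ₗ[R] Matrix m n R →ₗ[R] R :=
  LinearMap.mk₂ R (fun A B => ∑ p, ∑ q, A p q * B p q)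
    (fun A A' B => by simp only [add_apply, add_mul, sum_add_distrib])
    (fun c A B => by simp only [smul_apply, smul_eq_mul, mul_assoc, mul_sum])
    (fun A B B' => by simp only [add_apply, mul_add, sum_add_distrib])
    (fun c A B => by simp only [smul_apply, smul_eq_mul, mul_left_comm c, mul_sum])

theorem frobeniusForm_apply (A B : Matrix m n R) :
    frobeniusForm A B = ∑ p, ∑ q, A p q * B p q :=
  rfl

theorem frobeniusForm_vecMulVec (a c : m → R) (b e : n → R) :
    frobeniusForm (vecMulVec a b) (vecMulVec c e) = (a ⬝ᵥ c) * (b ⬝ᵥ e) := by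
  simp only [frobeniusForm_apply, vecMulVec_apply, dotProduct, sum_mul_sum]
  exact sum_congr rfl fun p _ => sum_congr rfl fun q _ => by ring

end Frobenius

section Symmetric

variable (m R : Type*) [CommSemiring R]

def symmetricSubmodule : Submodule R (Matrix m m R) where
  carrier := {A | A.IsSymm}
  add_mem' := IsSymm.add
  zero_mem' := isSymm_zero
  smul_mem' c _ hA := hA.smul c

variable {m R}

variable {K : Type*} [Field K] [Fintype m] [LinearOrder m]

theorem finrank_symmetricSubmodule_le :
    Module.finrank K (symmetricSubmodule m K) ≤ Fintype.card {pq : m × m // pq.1 ≤ pq.2} := by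
  let upper : symmetricSubmodule m K →ₗ[K] ({pq : m × m // pq.1 ≤ pq.2} → K) :=
    { toFun := fun A pq => A.1 pq.1.1 pq.1.2
      map_add' := fun _ _ => rfl
      map_smul' := fun _ _ => rfl }
  have hupper : Function.Injective upper := by
    intro A B hAB
    ext p q
    rcases le_total p q with hpq | hqp
    · exact congrFun hAB ⟨(p, q), hpq⟩
    · rw [← A.2.apply, ← B.2.apply]
      exact congrFun hAB ⟨(q, p), hqp⟩
  simpa using LinearMap.finrank_le_finrank_of_injective hupper

theorem span_eq_symmetricSubmodule {ι : Type*} [Fintype ι] {f : ι → Matrix m m K}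
    (hf : LinearIndependent K f) (hsymm : ∀ i, (f i).IsSymm)
    (hcard : Fintype.card {pq : m × m // pq.1 ≤ pq.2} ≤ Fintype.card ι) :
    Submodule.span K (Set.range f) = symmetricSubmodule m K :=
  Submodule.eq_of_le_of_finrank_le (Submodule.span_le.mpr (Set.range_subset_iff.mpr hsymm))
    (finrank_symmetricSubmodule_le.trans (hcard.trans (finrank_span_eq_card hf).ge))

end Symmetric

end Matrix

theorem Fin.card_subtype_le_le_card_subtype_lt_succ (d : ℕ) :
    Fintype.card {pq : Fin d × Fin d // pq.1 ≤ pq.2} ≤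
      Fintype.card {pr : Fin (d + 1) × Fin (d + 1) // pr.1 < pr.2} :=
  Fintype.card_le_of_injective
    (fun pq => ⟨(pq.1.1.castSucc, pq.1.2.succ), Fin.castSucc_lt_succ_iff.mpr pq.2⟩)
    fun pq pq' h => by
      simp only [Subtype.mk.injEq, Prod.mk.injEq, Fin.castSucc_inj, Fin.succ_inj] at h
      exact Subtype.ext (Prod.ext h.1 h.2)

section SimplexTensors

variable {ι V K : Type*} [Field K] (x n : ι → V → K)

def edgeTensor (i j : ι) : Matrix V V K :=
  vecMulVec (x j - x i) (x j - x i)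

theorem edgeTensor_isSymm (i j : ι) : (edgeTensor x i j).IsSymm :=
  transpose_vecMulVec _ _

variable [Fintype V]

def normalTensor (i j : ι) : Matrix V V K :=
  (2 * (n i ⬝ᵥ (x j - x i)) * (n j ⬝ᵥ (x j - x i)))⁻¹ •
    (vecMulVec (n i) (n j) + vecMulVec (n j) (n i))

theorem normalTensor_isSymm (i j : ι) : (normalTensor x n i j).IsSymm := by
  rw [IsSymm, normalTensor, transpose_smul, transpose_add, transpose_vecMulVec,
    transpose_vecMulVec, add_comm]

theorem frobeniusForm_edgeTensor_normalTensor (i j a b : ι) :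
    frobeniusForm (edgeTensor x i j) (normalTensor x n a b) =
      (2 * (n a ⬝ᵥ (x b - x a)) * (n b ⬝ᵥ (x b - x a)))⁻¹ *
        (2 * (n a ⬝ᵥ (x j - x i)) * (n b ⬝ᵥ (x j - x i))) := by
  rw [edgeTensor, normalTensor, map_smul, map_add, frobeniusForm_vecMulVec,
    frobeniusForm_vecMulVec, smul_eq_mul, dotProduct_comm (x j - x i) (n a),
    dotProduct_comm (x j - x i) (n b)]
  ring

variable [LinearOrder ι] [CharZero K] {x n}

theorem frobeniusForm_edgeTensor_normalTensor_of_lt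
    (horth : ∀ i j l : ι, j ≠ i → l ≠ i → n i ⬝ᵥ (x l - x j) = 0)
    (hne : ∀ i j : ι, i ≠ j → n i ⬝ᵥ (x j - x i) ≠ 0)
    {i j a b : ι} (hij : i < j) (hab : a < b) :
    frobeniusForm (edgeTensor x i j) (normalTensor x n a b) = if i = a ∧ j = b then 1 else 0 := by
  rw [frobeniusForm_edgeTensor_normalTensor]
  by_cases hia : i = a ∧ j = b
  · obtain ⟨rfl, rfl⟩ := hia
    have hj : n j ⬝ᵥ (x j - x i) ≠ 0 := by
      have := hne j i hij.ne'
      rwa [← neg_sub, dotProduct_neg, neg_ne_zero] at this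
    rw [if_pos ⟨rfl, rfl⟩]
    exact inv_mul_cancel₀ (mul_ne_zero (mul_ne_zero two_ne_zero (hne i j hij.ne)) hj)
  · rw [if_neg hia]
    have hoff : (i ≠ a ∧ j ≠ a) ∨ (i ≠ b ∧ j ≠ b) := by grind
    rcases hoff with ⟨hia, hja⟩ | ⟨hib, hjb⟩
    · rw [horth a i j hia hja]
      ring
    · rw [horth b i j hib hjb]
      ring

end SimplexTensors

theorem stmt_15_general (d : ℕ)
    (x : Fin (d + 1) → (Fin d → ℝ))
    (n : Fin (d + 1) → (Fin d → ℝ))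
    (horth : ∀ i j l : Fin (d + 1), j ≠ i → l ≠ i → n i ⬝ᵥ (x l - x j) = 0)
    (hne : ∀ i j : Fin (d + 1), i ≠ j → n i ⬝ᵥ (x j - x i) ≠ 0) :
    let T : Fin (d + 1) → Fin (d + 1) → Matrix (Fin d) (Fin d) ℝ :=
      fun i j => Matrix.vecMulVec (x j - x i) (x j - x i)
    let N : Fin (d + 1) → Fin (d + 1) → Matrix (Fin d) (Fin d) ℝ :=
      fun i j => (2 * (n i ⬝ᵥ (x j - x i)) * (n j ⬝ᵥ (x j - x i)))⁻¹ •
        (Matrix.vecMulVec (n i) (n j) + Matrix.vecMulVec (n j) (n i))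
    (∀ i j a b : Fin (d + 1), i < j → a < b →
      ∑ p : Fin d, ∑ q : Fin d, T i j p q * N a b p q =
        (if i = a ∧ j = b then (1 : ℝ) else 0)) ∧
    LinearIndependent ℝ
      (fun pr : {pr : Fin (d + 1) × Fin (d + 1) // pr.1 < pr.2} => T pr.1.1 pr.1.2) ∧
    (∀ A : Matrix (Fin d) (Fin d) ℝ, A.IsSymm →
      A ∈ Submodule.span ℝ
        (Set.range fun pr : {pr : Fin (d + 1) × Fin (d + 1) // pr.1 < pr.2} =>
          T pr.1.1 pr.1.2)) ∧
    LinearIndependent ℝ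
      (fun pr : {pr : Fin (d + 1) × Fin (d + 1) // pr.1 < pr.2} => N pr.1.1 pr.1.2) ∧
    (∀ A : Matrix (Fin d) (Fin d) ℝ, A.IsSymm →
      A ∈ Submodule.span ℝ
        (Set.range fun pr : {pr : Fin (d + 1) × Fin (d + 1) // pr.1 < pr.2} =>
          N pr.1.1 pr.1.2)) := by
  intro T N
  have hdual : ∀ i j a b : Fin (d + 1), i < j → a < b →
      frobeniusForm (T i j) (N a b) = if i = a ∧ j = b then 1 else 0 :=
    fun _ _ _ _ => frobeniusForm_edgeTensor_normalTensor_of_lt horth hne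
  have hpairs : ∀ pr pr' : {pr : Fin (d + 1) × Fin (d + 1) // pr.1 < pr.2},
      frobeniusForm (T pr.1.1 pr.1.2) (N pr'.1.1 pr'.1.2) = if pr = pr' then 1 else 0 := by
    rintro ⟨⟨i, j⟩, hij⟩ ⟨⟨a, b⟩, hab⟩
    rw [hdual i j a b hij hab]
    simp only [Subtype.mk.injEq, Prod.mk.injEq]
  obtain ⟨hT, hN⟩ := LinearMap.linearIndependent_of_biorthogonal
    (frobeniusForm : Matrix (Fin d) (Fin d) ℝ →ₗ[ℝ] Matrix (Fin d) (Fin d) ℝ →ₗ[ℝ] ℝ)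
    (u := fun pr : {pr : Fin (d + 1) × Fin (d + 1) // pr.1 < pr.2} => T pr.1.1 pr.1.2)
    (v := fun pr => N pr.1.1 pr.1.2) hpairs
  have hcard := Fin.card_subtype_le_le_card_subtype_lt_succ d
  exact ⟨hdual, hT,
    fun _ hA => (span_eq_symmetricSubmodule hT (fun _ => edgeTensor_isSymm x _ _) hcard).ge hA,
    hN,
    fun _ hA => (span_eq_symmetricSubmodule hN (fun _ => normalTensor_isSymm x n _ _) hcard).ge hA⟩

/-- For a nondegenerate simplex with vertices `x 0, …, x d` and face normals `n i`
(orthogonal to the opposite face), the symmetric tensors `T i j = t_{ij} t_{ij}ᵀ` and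
`N i j = (2 (n i · t_{ij})(n j · t_{ij}))⁻¹ (n_i n_jᵀ + n_j n_iᵀ)` (for `i < j`) are dual
to each other under the Frobenius inner product, and each family is a basis of the space
`𝕊` of symmetric `d × d` matrices. -/
theorem stmt_15 (d : ℕ) (hd : 1 ≤ d)
    (x : Fin (d + 1) → (Fin d → ℝ)) (hx : AffineIndependent ℝ x)
    (n : Fin (d + 1) → (Fin d → ℝ))
    (horth : ∀ i j l : Fin (d + 1), j ≠ i → l ≠ i → n i ⬝ᵥ (x l - x j) = 0)
    (hne : ∀ i j : Fin (d + 1), i ≠ j → n i ⬝ᵥ (x j - x i) ≠ 0) :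
    let T : Fin (d + 1) → Fin (d + 1) → Matrix (Fin d) (Fin d) ℝ :=
      fun i j => Matrix.vecMulVec (x j - x i) (x j - x i)
    let N : Fin (d + 1) → Fin (d + 1) → Matrix (Fin d) (Fin d) ℝ :=
      fun i j => (2 * (n i ⬝ᵥ (x j - x i)) * (n j ⬝ᵥ (x j - x i)))⁻¹ •
        (Matrix.vecMulVec (n i) (n j) + Matrix.vecMulVec (n j) (n i))
    (∀ i j a b : Fin (d + 1), i < j → a < b →
      ∑ p : Fin d, ∑ q : Fin d, T i j p q * N a b p q =
        (if i = a ∧ j = b then (1 : ℝ) else 0)) ∧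
    LinearIndependent ℝ
      (fun pr : {pr : Fin (d + 1) × Fin (d + 1) // pr.1 < pr.2} => T pr.1.1 pr.1.2) ∧
    (∀ A : Matrix (Fin d) (Fin d) ℝ, A.IsSymm →
      A ∈ Submodule.span ℝ
        (Set.range fun pr : {pr : Fin (d + 1) × Fin (d + 1) // pr.1 < pr.2} =>
          T pr.1.1 pr.1.2)) ∧
    LinearIndependent ℝ
      (fun pr : {pr : Fin (d + 1) × Fin (d + 1) // pr.1 < pr.2} => N pr.1.1 pr.1.2) ∧
    (∀ A : Matrix (Fin d) (Fin d) ℝ, A.IsSymm →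
      A ∈ Submodule.span ℝ
        (Set.range fun pr : {pr : Fin (d + 1) × Fin (d + 1) // pr.1 < pr.2} =>
          N pr.1.1 pr.1.2)) :=
  stmt_15_general d x n horth hne
end

section
/- On a nondegenerate simplex K ⊂ ℝ^d, for k ≥ 1, if v ∈ 𝔹_k(div, K) (i.e., v ∈ ℙ_k(K; ℝ^d) with v·n = 0 on ∂K) and ∫_K v·q dx = 0 for all q ∈ ℙ_{k−1}(K; ℝ^d), then v = 0. -/
open MvPolynomial Finset MeasureTheory Matrix

/-- The `(d-1)`-dimensional face of the simplex with vertices `x` opposite vertex `i`. -/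
noncomputable def face (d : ℕ) (x : Fin (d + 1) → (Fin d → ℝ)) (i : Fin (d + 1)) :
    Set (Fin d → ℝ) :=
  convexHull ℝ (x '' {j | j ≠ i})

/-- The simplex `K` with vertices `x`. -/
noncomputable def simplexSet (d : ℕ) (x : Fin (d + 1) → (Fin d → ℝ)) : Set (Fin d → ℝ) :=
  convexHull ℝ (Set.range x)

/-- Polynomial vector fields with components of total degree at most `k`. -/
noncomputable def Pvec (d k : ℕ) : Submodule ℝ (Fin d → MvPolynomial (Fin d) ℝ) :=
  Submodule.pi Set.univ fun _ => MvPolynomial.restrictTotalDegree (Fin d) ℝ k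

/-- The linear functional `v ↦ ∑ m, nv m * (v m)(y)`, the normal trace at a point. -/
noncomputable def normalTraceFun (d : ℕ) (nv y : Fin d → ℝ) :
    (Fin d → MvPolynomial (Fin d) ℝ) →ₗ[ℝ] ℝ :=
  ∑ m : Fin d, nv m • ((MvPolynomial.aeval y).toLinearMap ∘ₗ LinearMap.proj m)

/-- The div-bubble space `𝔹_k(div, K)`: polynomial vector fields of degree at most `k`
whose normal component vanishes on every face of the simplex. -/
noncomputable def divBubble (d k : ℕ) (x n : Fin (d + 1) → (Fin d → ℝ)) :
    Submodule ℝ (Fin d → MvPolynomial (Fin d) ℝ) :=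
  Pvec d k ⊓ ⨅ i, ⨅ y ∈ face d x i, LinearMap.ker (normalTraceFun d (n i) y)

section AuxLemmas

open MvPolynomial Finset MeasureTheory Matrix

lemma aux_analytic {d : ℕ} (p : MvPolynomial (Fin d) ℝ) :
    AnalyticOnNhd ℝ (fun y : Fin d → ℝ => eval y p) Set.univ := by
  induction p using MvPolynomial.induction_on with
  | C a => simpa using analyticOnNhd_const
  | add p q hp hq =>
      have h : AnalyticOnNhd ℝ (fun y => eval y p + eval y q) Set.univ := hp.add hq
      simpa using h
  | mul_X p i hp =>
      have hi : AnalyticOnNhd ℝ (fun y : Fin d → ℝ => y i) Set.univ :=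
        (ContinuousLinearMap.proj i : (Fin d → ℝ) →L[ℝ] ℝ).analyticOnNhd _
      simpa using hp.mul hi

lemma aux_cont {d : ℕ} (p : MvPolynomial (Fin d) ℝ) :
    Continuous fun y : Fin d → ℝ => eval y p := by
  rw [← continuousOn_univ]
  exact (aux_analytic p).continuousOn

lemma aux_zero_of_open {d : ℕ} (p : MvPolynomial (Fin d) ℝ) {U : Set (Fin d → ℝ)}
    (hU : IsOpen U) (hne : U.Nonempty) (h : ∀ y ∈ U, eval y p = 0) (y : Fin d → ℝ) :
    eval y p = 0 := by
  obtain ⟨y0, hy0⟩ := hne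
  have := (aux_analytic p).eqOn_zero_of_preconnected_of_eventuallyEq_zero
      isPreconnected_univ (Set.mem_univ y0)
      (by filter_upwards [hU.mem_nhds hy0] with z hz using h z hz)
  exact this (Set.mem_univ y)

lemma aux_eval_aeval {d : ℕ} (f : Fin d → MvPolynomial (Fin d) ℝ) (w : Fin d → ℝ)
    (p : MvPolynomial (Fin d) ℝ) :
    eval w (aeval f p) = eval (fun j => eval w (f j)) p := by
  rw [aeval_def, algebraMap_eq, eval₂_comp_left (eval w) C f p]
  have hcomp : (eval w).comp (C : ℝ →+* MvPolynomial (Fin d) ℝ) = RingHom.id ℝ := by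
    ext r; simp
  rw [hcomp]
  rfl

lemma aux_coeff_zero {d : ℕ} (i : Fin d) (p : MvPolynomial (Fin d) ℝ)
    (U : Set (Fin d → ℝ)) (hU : IsOpen U) (hne : U.Nonempty)
    (hz : ∀ w ∈ U, eval (Function.update w i 0) p = 0) :
    ∀ μ ∈ p.support, μ i ≠ 0 := by
  classical
  set q : MvPolynomial (Fin d) ℝ := aeval (Function.update X i 0) p with hq
  have hqeval : ∀ w : Fin d → ℝ, eval w q = eval (Function.update w i 0) p := by
    intro w
    rw [hq, aux_eval_aeval]
    have hfun : (fun j => eval w (Function.update X i (0:MvPolynomial (Fin d) ℝ) j))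
        = Function.update w i 0 := by
      funext j
      by_cases hji : j = i
      · subst hji; simp
      · simp [Function.update_of_ne hji]
    rw [hfun]
  have hq0 : q = 0 := by
    apply MvPolynomial.funext
    intro w
    rw [map_zero]
    exact aux_zero_of_open q hU hne (fun w' hw' => by rw [hqeval]; exact hz w' hw') w
  have hqsum : q = ∑ μ ∈ p.support.filter (fun μ => μ i = 0), monomial μ (coeff μ p) := by
    rw [hq]
    conv_lhs => rw [← p.support_sum_monomial_coeff]
    rw [map_sum, ← Finset.sum_filter_add_sum_filter_not p.support (fun μ => μ i = 0)]
    have hz1 : ∀ μ ∈ p.support.filter (fun μ => ¬ μ i = 0),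
        aeval (Function.update X i (0:MvPolynomial (Fin d) ℝ)) (monomial μ (coeff μ p)) = 0 := by
      intro μ hμ
      rw [mem_filter] at hμ
      rw [aeval_monomial]
      have : (μ.prod fun j k => Function.update X i (0:MvPolynomial (Fin d) ℝ) j ^ k) = 0 := by
        refine Finset.prod_eq_zero (Finsupp.mem_support_iff.2 hμ.2) ?_
        simp [zero_pow hμ.2]
      rw [this, mul_zero]
    have hz2 : ∀ μ ∈ p.support.filter (fun μ => μ i = 0),
        aeval (Function.update X i (0:MvPolynomial (Fin d) ℝ)) (monomial μ (coeff μ p))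
          = monomial μ (coeff μ p) := by
      intro μ hμ
      rw [mem_filter] at hμ
      rw [aeval_monomial]
      have h4 : (μ.prod fun j k => Function.update X i (0:MvPolynomial (Fin d) ℝ) j ^ k)
          = μ.prod fun j k => X j ^ k := by
        refine Finsupp.prod_congr fun j hj => ?_
        have : j ≠ i := fun hji => by
          apply Finsupp.mem_support_iff.1 hj; rw [hji]; exact hμ.2
        rw [Function.update_of_ne this]
      rw [h4, algebraMap_eq]
      exact (monomial_eq (s := μ) (a := coeff μ p)).symm
    rw [Finset.sum_congr rfl hz1, Finset.sum_congr rfl hz2, Finset.sum_const_zero, add_zero]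
  intro μ hμ hμi
  have : coeff μ q = coeff μ p := by
    rw [hqsum, coeff_sum]
    rw [Finset.sum_eq_single μ]
    · simp
    · intro ν hν hne'; simp [coeff_monomial, hne']
    · intro hc; exact absurd (Finset.mem_filter.2 ⟨hμ, hμi⟩) hc
  rw [hq0] at this
  exact MvPolynomial.mem_support_iff.1 hμ (by simpa using this.symm)

lemma aux_deg_aeval {d : ℕ} (f : Fin d → MvPolynomial (Fin d) ℝ)
    (hf : ∀ j, (f j).totalDegree ≤ 1) (p : MvPolynomial (Fin d) ℝ) :
    (aeval f p).totalDegree ≤ p.totalDegree := by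
  have h1 : aeval f p = ∑ μ ∈ p.support, aeval f (monomial μ (coeff μ p)) := by
    rw [← map_sum]; rw [p.support_sum_monomial_coeff]
  rw [h1]
  refine (totalDegree_finset_sum _ _).trans (Finset.sup_le fun μ hμ => ?_)
  rw [aeval_monomial]
  refine (totalDegree_mul _ _).trans ?_
  have h2 : (algebraMap ℝ (MvPolynomial (Fin d) ℝ) (coeff μ p)).totalDegree = 0 := by
    rw [algebraMap_eq]; exact totalDegree_C _
  rw [h2, zero_add]
  have h3 : (μ.prod fun i k => f i ^ k).totalDegree ≤ ∑ j ∈ μ.support, μ j := by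
    refine (totalDegree_finset_prod _ _).trans (Finset.sum_le_sum fun j hj => ?_)
    exact (totalDegree_pow _ _).trans (by
      calc μ j * (f j).totalDegree ≤ μ j * 1 := Nat.mul_le_mul_left _ (hf j)
      _ = μ j := Nat.mul_one _)
  refine h3.trans ?_
  have h4 : (∑ j ∈ μ.support, μ j) = μ.sum fun _ e => e := rfl
  rw [h4]
  exact le_totalDegree hμ

lemma aux_X_dvd {d : ℕ} (i : Fin d) (p : MvPolynomial (Fin d) ℝ)
    (h : ∀ μ ∈ p.support, μ i ≠ 0) : X i ∣ p := by
  conv_rhs => rw [← p.support_sum_monomial_coeff]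
  exact Finset.dvd_sum fun μ hμ => X_dvd_monomial.2 (Or.inr (h μ hμ))

lemma aux_factor {d k : ℕ} (i : Fin d) (p : MvPolynomial (Fin d) ℝ)
    (h : ∀ μ ∈ p.support, μ i ≠ 0) (hdeg : p.totalDegree ≤ k) :
    ∃ r : MvPolynomial (Fin d) ℝ, p = X i * r ∧ r.totalDegree ≤ k - 1 := by
  classical
  refine ⟨p.divMonomial (Finsupp.single i 1), ?_, ?_⟩
  · have hm : p.modMonomial (Finsupp.single i 1) = 0 :=
      X_dvd_iff_modMonomial_eq_zero.1 (aux_X_dvd i p h)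
    have := divMonomial_add_modMonomial_single p i
    rw [hm, add_zero] at this
    exact this.symm
  · refine Finset.sup_le fun m hm => ?_
    have hco : coeff (m + Finsupp.single i 1) p ≠ 0 := by
      have := MvPolynomial.mem_support_iff.1 hm
      rwa [coeff_divMonomial, add_comm] at this
    have hle : (m + Finsupp.single i 1).sum (fun _ e => e) ≤ k :=
      le_trans (le_totalDegree (MvPolynomial.mem_support_iff.2 hco)) hdeg
    have hsum : (m + Finsupp.single i 1).sum (fun _ e => e)
        = m.sum (fun _ e => e) + 1 := by
      rw [Finsupp.sum_add_index' (fun _ => rfl) (fun _ _ _ => rfl)]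
      simp
    omega

lemma aux_span {d : ℕ} (hd : 1 ≤ d) (x : Fin (d + 1) → (Fin d → ℝ))
    (hx : AffineIndependent ℝ x) :
    Submodule.span ℝ (Set.range fun i : Fin d => x i.succ - x 0) = ⊤ := by
  have h1 : LinearIndependent ℝ fun i : {j : Fin (d+1) // j ≠ 0} => x ↑i -ᵥ x 0 :=
    (affineIndependent_iff_linearIndependent_vsub ℝ x 0).1 hx
  have hinj : Function.Injective
      (fun i : Fin d => (⟨i.succ, Fin.succ_ne_zero i⟩ : {j : Fin (d+1) // j ≠ 0})) := by
    intro a b hab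
    exact Fin.succ_injective _ (congrArg Subtype.val hab)
  have h2 : LinearIndependent ℝ fun i : Fin d => x i.succ - x 0 := by
    have := h1.comp _ hinj
    exact this
  haveI : Nonempty (Fin d) := ⟨⟨0, hd⟩⟩
  exact h2.span_eq_top_of_card_eq_finrank (by simp)

lemma aux_dual {d : ℕ} (N u : Fin d → (Fin d → ℝ))
    (hc : ∀ i, N i ⬝ᵥ u i ≠ 0) (h0 : ∀ i j, i ≠ j → N i ⬝ᵥ u j = 0)
    (w : Fin d → ℝ) (m : Fin d) :
    ∑ j, (N j ⬝ᵥ u j)⁻¹ * u j m * (N j ⬝ᵥ w) = w m := by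
  classical
  set A : Matrix (Fin d) (Fin d) ℝ := Matrix.of (fun i l => N i l) with hA
  set B : Matrix (Fin d) (Fin d) ℝ := Matrix.of (fun l j => (N j ⬝ᵥ u j)⁻¹ * u j l) with hB
  have hAB : A * B = 1 := by
    ext i j
    rw [Matrix.mul_apply, Matrix.one_apply]
    have : ∑ l, A i l * B l j = (N j ⬝ᵥ u j)⁻¹ * (N i ⬝ᵥ u j) := by
      simp only [hA, hB, Matrix.of_apply, dotProduct, Finset.mul_sum]
      exact Finset.sum_congr rfl fun l _ => by ring
    rw [this]
    by_cases hij : i = j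
    · subst hij; rw [inv_mul_cancel₀ (hc i)]; simp
    · rw [h0 i j hij, mul_zero]; simp [hij]
  have hBA : B * A = 1 := mul_eq_one_comm.1 hAB
  have key : ∀ l, (∑ j, B m j * A j l) = if m = l then 1 else 0 := by
    intro l
    have := congrFun (congrFun hBA m) l
    rw [Matrix.mul_apply] at this
    rw [this, Matrix.one_apply]
  calc ∑ j, (N j ⬝ᵥ u j)⁻¹ * u j m * (N j ⬝ᵥ w)
      = ∑ j, ∑ l, B m j * (A j l * w l) := by
        refine Finset.sum_congr rfl fun j _ => ?_
        simp only [hA, hB, Matrix.of_apply, dotProduct, Finset.mul_sum]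
    _ = ∑ l, (∑ j, B m j * A j l) * w l := by
        rw [Finset.sum_comm]
        refine Finset.sum_congr rfl fun l _ => ?_
        rw [Finset.sum_mul]
        exact Finset.sum_congr rfl fun j _ => by ring
    _ = w m := by
        rw [Finset.sum_congr rfl fun l _ => by rw [key l]]
        simp

lemma aux_comb {d : ℕ} (x : Fin (d + 1) → Fin d → ℝ) (s : Set (Fin d → ℝ)) (w : Fin d → ℝ)
    (hw : ∀ j, 0 ≤ w j) (hs1 : ∑ j, w j ≤ 1)
    (hm0 : x 0 ∈ s) (hm2 : ∀ l : Fin d, w l ≠ 0 → x l.succ ∈ s) :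
    (fun m => x 0 m + ∑ j, (x j.succ m - x 0 m) * w j) ∈ convexHull ℝ s := by
  classical
  set W : Fin (d + 1) → ℝ := Fin.cons (1 - ∑ j, w j) w with hW
  have hW0 : ∀ j, 0 ≤ W j := by
    intro j
    induction j using Fin.cases with
    | zero => simp [hW]; linarith
    | succ l => simpa [hW] using hw l
  have hWsum : ∑ j, W j = 1 := by
    rw [hW, Fin.sum_cons]; ring
  set t : Finset (Fin (d + 1)) := Finset.univ.filter (fun j => W j ≠ 0) with ht
  have htsum : ∑ j ∈ t, W j = 1 := by
    rw [ht, Finset.sum_filter_ne_zero, hWsum]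
  have hmem : ∀ j ∈ t, x j ∈ s := by
    intro j hj
    have hWj : W j ≠ 0 := (Finset.mem_filter.1 hj).2
    induction j using Fin.cases with
    | zero => exact hm0
    | succ l => exact hm2 l (by simpa [hW] using hWj)
  have hcm : t.centerMass W x ∈ convexHull ℝ s :=
    t.centerMass_mem_convexHull (fun j _ => hW0 j) (by rw [htsum]; norm_num) hmem
  have hcm2 : t.centerMass W x = ∑ j, W j • x j := by
    rw [Finset.centerMass_eq_of_sum_1 _ _ htsum]
    refine Finset.sum_subset (Finset.subset_univ t) fun j _ hj => ?_
    have : W j = 0 := by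
      by_contra h
      exact hj (Finset.mem_filter.2 ⟨Finset.mem_univ j, h⟩)
    rw [this, zero_smul]
  have hpt : (∑ j, W j • x j) = fun m => x 0 m + ∑ j, (x j.succ m - x 0 m) * w j := by
    funext m
    rw [Fin.sum_univ_succ]
    simp only [hW, Fin.cons_zero, Fin.cons_succ, Pi.smul_apply, smul_eq_mul,
      Finset.sum_apply, Pi.add_apply]
    have key : ∑ j, (x j.succ m - x 0 m) * w j
        = (∑ j, w j * x j.succ m) - (∑ j, w j) * x 0 m := by
      rw [Finset.sum_mul, ← Finset.sum_sub_distrib]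
      exact Finset.sum_congr rfl fun j _ => by ring
    rw [key]
    ring
  rw [hcm2, hpt] at hcm
  exact hcm

lemma aux_int {d : ℕ} (K : Set (Fin d → ℝ)) (hK : IsCompact K)
    (F : (Fin d → ℝ) → ℝ) (hF : Continuous F) (hnn : ∀ y ∈ K, 0 ≤ F y)
    (hzero : ∫ y in K, F y = 0) {V : Set (Fin d → ℝ)} (hVopen : IsOpen V) (hVK : V ⊆ K) :
    ∀ y ∈ V, F y = 0 := by
  intro y0 hy0
  by_contra hne
  have hpos : 0 < F y0 := lt_of_le_of_ne (hnn y0 (hVK hy0)) (Ne.symm hne)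
  set sset : Set (Fin d → ℝ) := V ∩ F ⁻¹' (Set.Ioi (F y0 / 2)) with hs
  have hsopen : IsOpen sset := hVopen.inter (hF.isOpen_preimage _ isOpen_Ioi)
  have hy0s : y0 ∈ sset := ⟨hy0, by simp [Set.mem_preimage]; linarith⟩
  have hKmeas : MeasurableSet K := hK.isClosed.measurableSet
  have hintK : IntegrableOn F K := hF.continuousOn.integrableOn_compact hK
  have hμs_ne : volume sset ≠ ⊤ := by
    have : volume sset ≤ volume K := measure_mono fun z hz => hVK hz.1
    exact ne_top_of_le_ne_top hK.measure_lt_top.ne this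
  have hμs_pos : 0 < volume sset := hsopen.measure_pos _ ⟨y0, hy0s⟩
  have h1 : F y0 / 2 * (volume sset).toReal ≤ ∫ y in sset, F y := by
    have h := MeasureTheory.setIntegral_ge_of_const_le hsopen.measurableSet hμs_ne
      (fun z hz => le_of_lt hz.2) (hintK.mono_set fun z hz => hVK hz.1)
    rw [smul_eq_mul, measureReal_def, mul_comm] at h; exact h
  have h2 : ∫ y in sset, F y ≤ ∫ y in K, F y := by
    refine MeasureTheory.setIntegral_mono_set hintK ?_ ?_
    · exact (MeasureTheory.ae_restrict_mem hKmeas).mono hnn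
    · exact HasSubset.Subset.eventuallyLE fun z hz => hVK hz.1
  have h3 : 0 < (volume sset).toReal := ENNReal.toReal_pos hμs_pos.ne' hμs_ne
  nlinarith [h1, h2, hzero ▸ h2]

end AuxLemmas
/-- On a simplex `K ⊂ ℝ^d`, for `k ≥ 1`: if `v ∈ 𝔹_k(div, K)` (polynomial vector field of
degree at most `k` with vanishing normal component on `∂K`) and `∫_K v·q dx = 0` for all
polynomial vector fields `q` of degree at most `k−1`, then `v = 0`. -/
theorem stmt_17 (d k : ℕ) (hd : 1 ≤ d) (hk : 1 ≤ k)
    (x : Fin (d + 1) → (Fin d → ℝ)) (hx : AffineIndependent ℝ x)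
    (n : Fin (d + 1) → (Fin d → ℝ)) (hn0 : ∀ i, n i ≠ 0)
    (horth : ∀ i, ∀ y ∈ face d x i, ∀ z ∈ face d x i, n i ⬝ᵥ (y - z) = 0)
    (v : Fin d → MvPolynomial (Fin d) ℝ)
    (hvdeg : ∀ m, (v m).totalDegree ≤ k)
    (hvb : ∀ i, ∀ y ∈ face d x i, ∑ m : Fin d, n i m * eval y (v m) = 0)
    (hint : ∀ q : Fin d → MvPolynomial (Fin d) ℝ, (∀ m, (q m).totalDegree ≤ k - 1) →
      ∫ y in simplexSet d x, ∑ m : Fin d, eval y (v m) * eval y (q m) = 0) :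
    v = 0 := by
  classical
  haveI : Nonempty (Fin d) := ⟨⟨0, hd⟩⟩
  set u : Fin d → (Fin d → ℝ) := fun i => x i.succ - x 0 with hu
  set N : Fin d → (Fin d → ℝ) := fun i => n i.succ with hN
  have hmem : ∀ (i : Fin d) (j : Fin (d + 1)), j ≠ i.succ → x j ∈ face d x i.succ :=
    fun i j hj => subset_convexHull ℝ _ ⟨j, hj, rfl⟩
  have hNu0 : ∀ i j : Fin d, i ≠ j → N i ⬝ᵥ u j = 0 := by
    intro i j hij
    have h1 : (j.succ : Fin (d+1)) ≠ i.succ := fun h => hij (Fin.succ_injective _ h).symm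
    have h2 : (0 : Fin (d+1)) ≠ i.succ := (Fin.succ_ne_zero i).symm
    exact horth i.succ (x j.succ) (hmem i j.succ h1) (x 0) (hmem i 0 h2)
  have hspan : Submodule.span ℝ (Set.range u) = ⊤ := aux_span hd x hx
  have hc : ∀ i, N i ⬝ᵥ u i ≠ 0 := by
    intro i hci
    have hall : ∀ j, N i ⬝ᵥ u j = 0 := fun j => by
      by_cases h : i = j
      · rw [← h]; exact hci
      · exact hNu0 i j h
    have hzero : ∀ w : Fin d → ℝ, N i ⬝ᵥ w = 0 := by
      intro w
      have hw : w ∈ Submodule.span ℝ (Set.range u) := by rw [hspan]; trivial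
      obtain ⟨a, ha⟩ := (Submodule.mem_span_range_iff_exists_fun ℝ).1 hw
      rw [← ha]
      have hexp : N i ⬝ᵥ (∑ j, a j • u j) = ∑ j, a j * (N i ⬝ᵥ u j) := by
        simp only [dotProduct, Finset.sum_apply, Pi.smul_apply, smul_eq_mul, Finset.mul_sum]
        rw [Finset.sum_comm]
        exact Finset.sum_congr rfl fun j _ => Finset.sum_congr rfl fun l _ => by ring
      rw [hexp]
      simp [hall]
    have hNi : N i = 0 := by
      funext m
      have h5 := hzero (Pi.single m 1)
      simpa [dotProduct, Pi.single_apply] using h5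
    exact hn0 i.succ hNi
  have hdual : ∀ (w : Fin d → ℝ) (m : Fin d),
      ∑ j, (N j ⬝ᵥ u j)⁻¹ * u j m * (N j ⬝ᵥ w) = w m := aux_dual N u hc hNu0
  -- polynomial g i = N i · v
  set g : Fin d → MvPolynomial (Fin d) ℝ := fun i => ∑ l, MvPolynomial.C (N i l) * v l
    with hgdef
  have hgeval : ∀ i y, eval y (g i) = ∑ l, N i l * eval y (v l) := by
    intro i y; rw [hgdef]; simp
  have hgdeg : ∀ i, (g i).totalDegree ≤ k := by
    intro i
    rw [hgdef]
    refine (totalDegree_finset_sum _ _).trans (Finset.sup_le fun l _ => ?_)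
    calc (MvPolynomial.C (N i l) * v l).totalDegree
        ≤ (MvPolynomial.C (N i l)).totalDegree + (v l).totalDegree := totalDegree_mul _ _
      _ ≤ k := by rw [totalDegree_C]; simpa using hvdeg l
  have hgface : ∀ i : Fin d, ∀ y ∈ face d x i.succ, eval y (g i) = 0 := by
    intro i y hy
    rw [hgeval]
    exact hvb i.succ y hy
  -- forward substitution
  set Φ : Fin d → MvPolynomial (Fin d) ℝ :=
    fun m => MvPolynomial.C (x 0 m) + ∑ j, MvPolynomial.C (u j m) * X j with hΦdef
  set T : (Fin d → ℝ) → (Fin d → ℝ) :=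
    fun w m => x 0 m + ∑ j, (x j.succ m - x 0 m) * w j with hTdef
  have hΦeval : ∀ w : Fin d → ℝ, (fun m => eval w (Φ m)) = T w := by
    intro w; funext m; rw [hΦdef, hTdef]; simp [hu]
  have hΦdeg : ∀ m, (Φ m).totalDegree ≤ 1 := by
    intro m
    rw [hΦdef]
    refine (totalDegree_add _ _).trans (max_le (by simp [totalDegree_C]) ?_)
    refine (totalDegree_finset_sum _ _).trans (Finset.sup_le fun j _ => ?_)
    calc (MvPolynomial.C (u j m) * X j).totalDegree
        ≤ (MvPolynomial.C (u j m)).totalDegree + (X j : MvPolynomial (Fin d) ℝ).totalDegree :=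
          totalDegree_mul _ _
      _ ≤ 1 := by rw [totalDegree_C, totalDegree_X]
  set G : Fin d → MvPolynomial (Fin d) ℝ := fun i => aeval Φ (g i) with hGdef
  have hGeval : ∀ (i : Fin d) w, eval w (G i) = eval (T w) (g i) := by
    intro i w; rw [hGdef, aux_eval_aeval, hΦeval]
  have hGdeg : ∀ i, (G i).totalDegree ≤ k :=
    fun i => (aux_deg_aeval Φ hΦdeg (g i)).trans (hgdeg i)
  -- the open simplex in parameter space
  set Wset : Set (Fin d → ℝ) := {w | (∀ j, 0 < w j) ∧ ∑ j, w j < 1} with hWdef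
  have hWopen : IsOpen Wset := by
    have h1 : IsOpen {w : Fin d → ℝ | ∀ j, 0 < w j} := by
      have he : {w : Fin d → ℝ | ∀ j, 0 < w j} = ⋂ j, {w | 0 < w j} := by ext w; simp
      rw [he]
      exact isOpen_iInter_of_finite fun j =>
        isOpen_lt continuous_const (continuous_apply j)
    have h2 : IsOpen {w : Fin d → ℝ | ∑ j, w j < 1} :=
      isOpen_lt (continuous_finset_sum _ fun j _ => continuous_apply j) continuous_const
    exact h1.inter h2
  have hWne : Wset.Nonempty := by
    refine ⟨fun _ => 1 / (d + 1), fun j => by positivity, ?_⟩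
    rw [Finset.sum_const, Finset.card_univ, Fintype.card_fin, nsmul_eq_mul]
    have he : (d : ℝ) * (1 / (d + 1)) = d / (d + 1) := by ring
    rw [he, div_lt_one (by positivity)]
    linarith
  -- factor G i = X i * r i
  have hfactor : ∀ i : Fin d, ∃ r : MvPolynomial (Fin d) ℝ,
      G i = X i * r ∧ r.totalDegree ≤ k - 1 := by
    intro i
    refine aux_factor i (G i) ?_ (hGdeg i)
    refine aux_coeff_zero i (G i) Wset hWopen hWne ?_
    intro w hw
    rw [hGeval]
    apply hgface i
    obtain ⟨hw1, hw2⟩ := hw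
    have hup0 : ∀ j, 0 ≤ Function.update w i 0 j := by
      intro j; by_cases h : j = i
      · subst h; simp
      · rw [Function.update_of_ne h]; exact (hw1 j).le
    have hups : ∑ j, Function.update w i 0 j ≤ 1 := by
      refine le_trans (Finset.sum_le_sum fun j _ => ?_) hw2.le
      by_cases h : j = i
      · subst h; simp; exact (hw1 j).le
      · rw [Function.update_of_ne h]
    have hx0 : x 0 ∈ x '' {j | j ≠ i.succ} :=
      ⟨0, (Fin.succ_ne_zero i).symm, rfl⟩
    have hxl : ∀ l : Fin d, Function.update w i 0 l ≠ 0 →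
        x l.succ ∈ x '' {j | j ≠ i.succ} := by
      intro l hl
      have hli : l ≠ i := by
        intro h; subst h; simp at hl
      exact ⟨l.succ, fun h => hli (Fin.succ_injective _ h), rfl⟩
    have hcomb := aux_comb x (x '' {j | j ≠ i.succ}) (Function.update w i 0)
      hup0 hups hx0 hxl
    exact hcomb
  choose r hXr hrdeg using hfactor
  -- backward substitution
  set Ψ : Fin d → MvPolynomial (Fin d) ℝ :=
    fun j => MvPolynomial.C ((N j ⬝ᵥ u j)⁻¹) *
      ((∑ m, MvPolynomial.C (N j m) * X m) - MvPolynomial.C (N j ⬝ᵥ x 0)) with hΨdef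
  have hΨeval : ∀ (j : Fin d) y, eval y (Ψ j)
      = (N j ⬝ᵥ u j)⁻¹ * (N j ⬝ᵥ y - N j ⬝ᵥ x 0) := by
    intro j y; rw [hΨdef]; simp [dotProduct]
  have hΨdeg : ∀ j, (Ψ j).totalDegree ≤ 1 := by
    intro j
    rw [hΨdef]
    refine (totalDegree_mul _ _).trans ?_
    rw [totalDegree_C, zero_add]
    refine (totalDegree_sub _ _).trans (max_le ?_ (by simp [totalDegree_C]))
    refine (totalDegree_finset_sum _ _).trans (Finset.sup_le fun m _ => ?_)
    calc (MvPolynomial.C (N j m) * X m).totalDegree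
        ≤ (MvPolynomial.C (N j m)).totalDegree + (X m : MvPolynomial (Fin d) ℝ).totalDegree :=
          totalDegree_mul _ _
      _ ≤ 1 := by rw [totalDegree_C, totalDegree_X]
  set S : (Fin d → ℝ) → (Fin d → ℝ) := fun y j => eval y (Ψ j) with hSdef
  have hTS : ∀ y, T (S y) = y := by
    intro y; funext m
    have hd2 := hdual (y - x 0) m
    show x 0 m + ∑ j, (x j.succ m - x 0 m) * S y j = y m
    have hterm : ∀ j : Fin d, (x j.succ m - x 0 m) * S y j
        = (N j ⬝ᵥ u j)⁻¹ * u j m * (N j ⬝ᵥ (y - x 0)) := by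
      intro j
      rw [hSdef]
      show (x j.succ m - x 0 m) * eval y (Ψ j) = _
      rw [hΨeval]
      have hsub : N j ⬝ᵥ (y - x 0) = N j ⬝ᵥ y - N j ⬝ᵥ x 0 := by
        simp [dotProduct, Finset.sum_sub_distrib, mul_sub]
      rw [hsub]
      have hum : u j m = x j.succ m - x 0 m := rfl
      rw [← hum]; ring
    rw [Finset.sum_congr rfl fun j _ => hterm j, hd2]
    simp
  set P : Fin d → MvPolynomial (Fin d) ℝ := fun i => aeval Ψ (r i) with hPdef
  have hPeval : ∀ (i : Fin d) y, eval y (P i) = eval (S y) (r i) := by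
    intro i y; rw [hPdef, aux_eval_aeval]
  have hPdeg : ∀ i, (P i).totalDegree ≤ k - 1 :=
    fun i => (aux_deg_aeval Ψ hΨdeg (r i)).trans (hrdeg i)
  have hgfactor : ∀ (i : Fin d) y, eval y (g i) = eval y (Ψ i) * eval y (P i) := by
    intro i y
    conv_lhs => rw [← hTS y]
    rw [← hGeval i (S y), hXr i, eval_mul, eval_X, hPeval]
  -- nonnegativity of barycentric coordinates on K
  have hΨK : ∀ i : Fin d, ∀ y ∈ simplexSet d x, 0 ≤ eval y (Ψ i) := by
    intro i
    have hsub : simplexSet d x ⊆ {y | 0 ≤ eval y (Ψ i)} := by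
      rw [simplexSet]
      apply convexHull_min
      · rintro _ ⟨j, rfl⟩
        induction j using Fin.cases with
        | zero => rw [Set.mem_setOf_eq, hΨeval]; simp
        | succ l =>
            rw [Set.mem_setOf_eq, hΨeval]
            have hsub2 : N i ⬝ᵥ x l.succ - N i ⬝ᵥ x 0 = N i ⬝ᵥ u l := by
              simp [dotProduct, Finset.sum_sub_distrib, mul_sub, hu]
            rw [hsub2]
            by_cases hli : i = l
            · subst hli; rw [inv_mul_cancel₀ (hc i)]; norm_num
            · rw [hNu0 i l hli, mul_zero]
      · intro y hy z hz a b ha hb hab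
        rw [Set.mem_setOf_eq] at hy hz ⊢
        rw [hΨeval] at hy hz ⊢
        have hdot : N i ⬝ᵥ (a • y + b • z) = a * (N i ⬝ᵥ y) + b * (N i ⬝ᵥ z) := by
          simp only [dotProduct, Pi.add_apply, Pi.smul_apply, smul_eq_mul, Finset.mul_sum]
          rw [← Finset.sum_add_distrib]
          exact Finset.sum_congr rfl fun m _ => by ring
        rw [hdot]
        have hcomb2 : (N i ⬝ᵥ u i)⁻¹ * (a * (N i ⬝ᵥ y) + b * (N i ⬝ᵥ z) - N i ⬝ᵥ x 0)
            = a * ((N i ⬝ᵥ u i)⁻¹ * (N i ⬝ᵥ y - N i ⬝ᵥ x 0))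
              + b * ((N i ⬝ᵥ u i)⁻¹ * (N i ⬝ᵥ z - N i ⬝ᵥ x 0)) := by
          have hx0' : N i ⬝ᵥ x 0 = (a + b) * (N i ⬝ᵥ x 0) := by rw [hab, one_mul]
          conv_lhs => rw [hx0']
          ring
        rw [hcomb2]
        exact add_nonneg (mul_nonneg ha hy) (mul_nonneg hb hz)
    exact fun y hy => hsub hy
  -- the open set V inside K
  set Vset : Set (Fin d → ℝ) :=
    {y | (∀ j, 0 < eval y (Ψ j)) ∧ ∑ j, eval y (Ψ j) < 1} with hVdef
  have hVopen : IsOpen Vset := by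
    have h1 : IsOpen {y : Fin d → ℝ | ∀ j, 0 < eval y (Ψ j)} := by
      have he : {y : Fin d → ℝ | ∀ j, 0 < eval y (Ψ j)}
          = ⋂ j, {y | 0 < eval y (Ψ j)} := by ext w; simp
      rw [he]
      exact isOpen_iInter_of_finite fun j => isOpen_lt continuous_const (aux_cont _)
    have h2 : IsOpen {y : Fin d → ℝ | ∑ j, eval y (Ψ j) < 1} :=
      isOpen_lt (continuous_finset_sum _ fun j _ => aux_cont _) continuous_const
    exact h1.inter h2
  have hST : ∀ (w : Fin d → ℝ) (j : Fin d), eval (T w) (Ψ j) = w j := by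
    intro w j
    rw [hΨeval]
    have h1 : N j ⬝ᵥ T w - N j ⬝ᵥ x 0 = ∑ l, w l * (N j ⬝ᵥ u l) := by
      have e1 : N j ⬝ᵥ T w
          = N j ⬝ᵥ x 0 + ∑ m, ∑ l, N j m * ((x l.succ m - x 0 m) * w l) := by
        simp only [hTdef, dotProduct, mul_add, Finset.sum_add_distrib, Finset.mul_sum]
      rw [e1, add_sub_cancel_left, Finset.sum_comm]
      refine Finset.sum_congr rfl fun l _ => ?_
      simp only [dotProduct, Finset.mul_sum]
      refine Finset.sum_congr rfl fun m _ => ?_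
      have hum : u l m = x l.succ m - x 0 m := rfl
      rw [hum]; ring
    rw [h1]
    rw [Finset.sum_eq_single j (fun l _ hl => by rw [hNu0 j l (Ne.symm hl), mul_zero])
      (fun h => absurd (Finset.mem_univ j) h)]
    rw [mul_comm (w j), ← mul_assoc, inv_mul_cancel₀ (hc j), one_mul]
  have hVne : Vset.Nonempty := by
    obtain ⟨w0, hw0⟩ := hWne
    refine ⟨T w0, ?_, ?_⟩
    · intro j; rw [hST]; exact hw0.1 j
    · rw [Finset.sum_congr rfl fun j _ => hST w0 j]
      exact hw0.2
  have hVK : Vset ⊆ simplexSet d x := by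
    intro y hy
    have hcomb := aux_comb x (Set.range x) (fun j => eval y (Ψ j))
        (fun j => (hy.1 j).le) hy.2.le ⟨0, rfl⟩ (fun l _ => ⟨l.succ, rfl⟩)
    rw [simplexSet]
    have hyT : (fun m => x 0 m + ∑ j, (x j.succ m - x 0 m) * eval y (Ψ j)) = y := hTS y
    rwa [hyT] at hcomb
  -- the integral argument
  set F : (Fin d → ℝ) → ℝ := fun y => ∑ i, eval y (Ψ i) * (eval y (P i))^2 with hFdef
  set q : Fin d → MvPolynomial (Fin d) ℝ :=
    fun m => ∑ i, MvPolynomial.C (N i m) * P i with hqdef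
  have hqdeg : ∀ m, (q m).totalDegree ≤ k - 1 := by
    intro m
    simp only [hqdef]
    refine (totalDegree_finset_sum _ _).trans (Finset.sup_le fun i _ => ?_)
    calc (MvPolynomial.C (N i m) * P i).totalDegree
        ≤ (MvPolynomial.C (N i m)).totalDegree + (P i).totalDegree := totalDegree_mul _ _
      _ ≤ k - 1 := by rw [totalDegree_C]; simpa using hPdeg i
  have hpt : ∀ y, (∑ m, eval y (v m) * eval y (q m)) = F y := by
    intro y
    simp only [hFdef, hqdef]
    calc ∑ m, eval y (v m) * eval y (∑ i, MvPolynomial.C (N i m) * P i)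
        = ∑ m, ∑ i, N i m * eval y (v m) * eval y (P i) := by
          refine Finset.sum_congr rfl fun m _ => ?_
          rw [map_sum, Finset.mul_sum]
          refine Finset.sum_congr rfl fun i _ => ?_
          rw [eval_mul, eval_C]; ring
      _ = ∑ i, (∑ m, N i m * eval y (v m)) * eval y (P i) := by
          rw [Finset.sum_comm]
          exact Finset.sum_congr rfl fun i _ => (Finset.sum_mul _ _ _).symm
      _ = ∑ i, eval y (Ψ i) * (eval y (P i))^2 := by
          refine Finset.sum_congr rfl fun i _ => ?_
          rw [← hgeval, hgfactor]; ring
  have hint0 : ∫ y in simplexSet d x, F y = 0 := by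
    have heq : (fun y => ∑ m, eval y (v m) * eval y (q m)) = F := funext hpt
    rw [← heq]
    exact hint q hqdeg
  have hKcomp : IsCompact (simplexSet d x) := by
    rw [simplexSet]; exact (Set.finite_range x).isCompact_convexHull ℝ
  have hFcont : Continuous F := by
    simp only [hFdef]
    exact continuous_finset_sum _ fun i _ => (aux_cont _).mul ((aux_cont _).pow 2)
  have hFnn : ∀ y ∈ simplexSet d x, 0 ≤ F y := by
    intro y hy
    simp only [hFdef]
    exact Finset.sum_nonneg fun i _ => mul_nonneg (hΨK i y hy) (sq_nonneg _)
  have hF0 : ∀ y ∈ Vset, F y = 0 :=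
    aux_int _ hKcomp F hFcont hFnn hint0 hVopen hVK
  have hP0 : ∀ (i : Fin d) y, eval y (P i) = 0 := by
    intro i
    refine aux_zero_of_open (P i) hVopen hVne ?_
    intro y hy
    have hterm : eval y (Ψ i) * (eval y (P i))^2 = 0 := by
      have hsum := hF0 y hy
      simp only [hFdef] at hsum
      exact (Finset.sum_eq_zero_iff_of_nonneg fun j _ =>
        mul_nonneg (hy.1 j).le (sq_nonneg _)).1 hsum i (Finset.mem_univ i)
    rcases mul_eq_zero.1 hterm with h | h
    · exact absurd h (hy.1 i).ne'
    · exact (pow_eq_zero_iff two_ne_zero).1 h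
  have hv0 : ∀ m y, eval y (v m) = 0 := by
    intro m y
    have hdd := hdual (fun l => eval y (v l)) m
    have hgz : ∀ j : Fin d, N j ⬝ᵥ (fun l => eval y (v l)) = 0 := by
      intro j
      have he : N j ⬝ᵥ (fun l => eval y (v l)) = eval y (g j) := (hgeval j y).symm
      rw [he, hgfactor, hP0 j y, mul_zero]
    rw [← hdd]
    refine Finset.sum_eq_zero fun j _ => ?_
    rw [hgz j, mul_zero]
  funext m
  exact MvPolynomial.funext fun y => by simp [hv0 m y]
end
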